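/- Let λ ∈ ℍ \ ℝ, set a = re(λ) and b = ‖im λ‖, and let I ∈ ℍ satisfy I² = −1 with I ∉ ℝ. Then a + b•I and a − b•I are quadratically equivalent to λ, and an element r of the real subalgebra ℝ·1 + ℝ·I satisfies r² − tr(λ)·r + n(λ) = 0 if and only if r = a + b•I or r = a − b•I. -/
import Mathlib
set_option maxHeartbeats 1000000
open Quaternion


/- Corollary 3.7 (specialized to ℍ): let `λ ∈ ℍ \ ℝ`, `a = re λ`, `b = ‖im λ‖`,
and let `I ∉ ℝ` satisfy `I² = −1`. Then `a + b•I` and `a − b•I` are quadratically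
equivalent to `λ`, and an element `r` of the real subalgebra `ℝ·1 + ℝ·I` satisfies
`r² − tr(λ)·r + n(λ) = 0` iff `r = a + b•I` or `r = a − b•I`. -/
theorem roots_of_char_poly_in_complex_subfield
    (lam I : Quaternion ℝ)
    (hlam : lam ∉ Set.range (algebraMap ℝ (Quaternion ℝ)))
    (hI : I ^ 2 = -1) (hI' : I ∉ Set.range (algebraMap ℝ (Quaternion ℝ))) :
    (2 * ((lam.re : Quaternion ℝ) + ‖lam.im‖ • I).re = 2 * lam.re ∧
      Quaternion.normSq ((lam.re : Quaternion ℝ) + ‖lam.im‖ • I) = Quaternion.normSq lam) ∧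
    (2 * ((lam.re : Quaternion ℝ) - ‖lam.im‖ • I).re = 2 * lam.re ∧
      Quaternion.normSq ((lam.re : Quaternion ℝ) - ‖lam.im‖ • I) = Quaternion.normSq lam) ∧
    (∀ r : Quaternion ℝ, (∃ s t : ℝ, r = (s : Quaternion ℝ) + t • I) →
      (r ^ 2 - (2 * lam.re) • r + ((Quaternion.normSq lam : ℝ) : Quaternion ℝ) = 0 ↔
        r = (lam.re : Quaternion ℝ) + ‖lam.im‖ • I ∨
          r = (lam.re : Quaternion ℝ) - ‖lam.im‖ • I)) := by
  have hn1 : normSq I = 1 := by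
    have h2 : (normSq I)^2 = 1 := by
      have := congrArg normSq hI
      simpa [map_pow, normSq_neg] using this
    nlinarith [normSq_nonneg (a := I)]
  have hIre : I.re = 0 := by
    rw [← Quaternion.sq_eq_neg_normSq, hn1]; simpa using hI
  have him : lam.im ≠ 0 := by
    intro h
    apply hlam
    refine ⟨lam.re, ?_⟩
    have := lam.re_add_im
    rw [h, add_zero] at this
    simpa [Quaternion.algebraMap_def] using this
  have hbpos : 0 < ‖lam.im‖ := norm_pos_iff.2 him
  have hb : ‖lam.im‖^2 = lam.imI^2 + lam.imJ^2 + lam.imK^2 := by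
    rw [sq, ← normSq_eq_norm_mul_self, normSq_def']
    simp
  have hIn : I.imI^2 + I.imJ^2 + I.imK^2 = 1 := by
    have := hn1
    rw [normSq_def', hIre] at this
    linarith [this]
  have hnl : normSq lam = lam.re^2 + ‖lam.im‖^2 := by
    rw [normSq_def', hb]; ring
  refine ⟨⟨by simp [hIre], ?_⟩, ⟨by simp [hIre], ?_⟩, ?_⟩
  · rw [normSq_def', normSq_def']
    simp [hIre]
    nlinarith [hIn, hb]
  · rw [normSq_def', normSq_def']
    simp [hIre]
    nlinarith [hIn, hb]
  · rintro r ⟨s, t, rfl⟩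
    constructor
    · intro h
      rw [Quaternion.ext_iff] at h
      simp [pow_two, Quaternion.re_mul, Quaternion.imI_mul, Quaternion.imJ_mul,
        Quaternion.imK_mul, hIre] at h
      obtain ⟨h1, h2, h3, h4⟩ := h
      have e2 : t * (s - lam.re) * I.imI = 0 := by linarith
      have e3 : t * (s - lam.re) * I.imJ = 0 := by linarith
      have e4 : t * (s - lam.re) * I.imK = 0 := by linarith
      have h0 : (t * (s - lam.re))^2 = 0 := by
        linear_combination (-(t * (s - lam.re))^2) * hIn +
          (t * (s - lam.re) * I.imI) * e2 + (t * (s - lam.re) * I.imJ) * e3 +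
          (t * (s - lam.re) * I.imK) * e4
      have h0' : t = 0 ∨ s = lam.re := by
        rcases mul_eq_zero.1 (sq_eq_zero_iff.1 h0) with h | h
        · exact Or.inl h
        · exact Or.inr (by linarith)
      rcases h0' with ht | hs
      · exfalso
        subst ht
        nlinarith [hnl, hbpos, sq_nonneg (s - lam.re)]
      · subst hs
        have ht2 : (t - ‖lam.im‖) * (t + ‖lam.im‖) = 0 := by linear_combination -h1 + hnl - t^2*hIn
        rcases mul_eq_zero.1 ht2 with ht | ht
        · left
          have : t = ‖lam.im‖ := by linarith
          rw [this]
        · right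
          have : t = -‖lam.im‖ := by linarith
          rw [this, sub_eq_add_neg, ← neg_smul]
    · rintro (h | h) <;> rw [h] <;>
      · rw [Quaternion.ext_iff]
        simp [pow_two, Quaternion.re_mul, Quaternion.imI_mul, Quaternion.imJ_mul,
          Quaternion.imK_mul, hIre]
        refine ⟨?_, ?_, ?_, ?_⟩ <;> nlinarith [hIn, hnl]
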